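/- arXiv:1508.04192 — 3 statements merged into one kernel-verified Lean document; each statement's English description precedes it below -/
import Mathlib

section
/- Under the Weierstrass setting, let t ≥ s, let L, D ∈ ℂ^{n×t} be arbitrary matrices, set R := F₀·D, Â := L*·A·R and B̂ := L*·B·R (where * denotes conjugate transpose). Then for every z ∈ ℂ one has the factorization z·B̂ − Â = (L*·(T^{-1})_{(:,1:s)}) · (z·I_s − J₁) · ((S^{-1})_{(1:s,:)}·D). -/
/-!
The first `s` columns of `S` span a deflating subspace of the pencil `z B - A`: reading the
first `s` columns of the Weierstrass form gives `A S₁ = T'₁ J₁` and `B S₁ = T'₁`, where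
`S₁ = S_{(:,1:s)}` and `T'₁ = (T⁻¹)_{(:,1:s)}`. Since `F₀ = S₁ (S⁻¹)_{(1:s,:)}`, both compressed
matrices factor through `S₁`, and the factorization follows.
-/

open Matrix

-- `K` is explicit: left to unification, it lets products `M * castLEIncl h` pick up the
-- `CStarMatrix` multiplication instance.
def Matrix.castLEIncl (K : Type*) [Zero K] [One K] {m n : ℕ} (h : m ≤ n) : Matrix (Fin n) (Fin m) K :=
  (1 : Matrix (Fin n) (Fin n) K).submatrix id (Fin.castLE h)

section Semiring

variable {K : Type*} [Semiring K]

theorem Matrix.submatrix_id_castLE_eq_mul {l m n : ℕ} (h : m ≤ n) (X : Matrix (Fin l) (Fin n) K) :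
    X.submatrix id (Fin.castLE h) = X * castLEIncl K h :=
  (mul_submatrix_one (Equiv.refl (Fin n)) (Fin.castLE h) X).symm

theorem Matrix.castLEIncl_mul_castLEIncl {k m n : ℕ} (hmn : m ≤ n) (hkm : k ≤ m) :
    castLEIncl K hmn * castLEIncl K hkm = castLEIncl K (hkm.trans hmn) := by
  rw [← submatrix_id_castLE_eq_mul hkm, castLEIncl, submatrix_submatrix]
  rfl

theorem Matrix.submatrix_fromBlocks_mul_castLEIncl {m n : ℕ} (h : m ≤ n)
    (X : Matrix (Fin m) (Fin m) K) (Y : Matrix (Fin (n - m)) (Fin (n - m)) K) :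
    (fromBlocks X 0 0 Y).submatrix
        (finSumFinEquiv.trans (finCongr (Nat.add_sub_cancel' h))).symm
        (finSumFinEquiv.trans (finCongr (Nat.add_sub_cancel' h))).symm * castLEIncl K h =
      castLEIncl K h * X := by
  set e : Fin m ⊕ Fin (n - m) ≃ Fin n := finSumFinEquiv.trans (finCongr (Nat.add_sub_cancel' h))
  have he : ∀ j, e (Sum.inl j) = Fin.castLE h j := fun j => by ext; simp [e]
  ext i j
  obtain ⟨i, rfl⟩ := e.surjective i
  rw [← submatrix_id_castLE_eq_mul h]
  rcases i with a | a <;> simp [castLEIncl, mul_apply, ← he, one_apply]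

end Semiring

theorem Matrix.deflating_pencil_factorization {K : Type*} [CommRing K]
    {ι μ ν κ : Type*} [Fintype ι] [DecidableEq ι] [Fintype μ] [DecidableEq μ]
    {A B S T : Matrix ι ι K} {P : Matrix ι μ K} {J₁ : Matrix μ μ K} (hT : IsUnit T.det)
    (hA : T * A * S * P = P * J₁) (hB : T * B * S * P = P)
    (L : Matrix ν ι K) (X : Matrix μ κ K) (z : K) :
    z • (L * B * (S * P * X)) - L * A * (S * P * X) = L * (T⁻¹ * P) * (z • 1 - J₁) * X := by
  have hA' : A * (S * P) = T⁻¹ * P * J₁ := by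
    rw [← nonsing_inv_mul_cancel_left T (A * (S * P)) hT, Matrix.mul_assoc T⁻¹ P]
    congr 1
    simpa only [Matrix.mul_assoc] using hA
  have hB' : B * (S * P) = T⁻¹ * P := by
    rw [← nonsing_inv_mul_cancel_left T (B * (S * P)) hT]
    congr 1
    simpa only [Matrix.mul_assoc] using hB
  calc z • (L * B * (S * P * X)) - L * A * (S * P * X)
      = z • (L * (B * (S * P)) * X) - L * (A * (S * P)) * X := by simp only [Matrix.mul_assoc]
    _ = z • (L * (T⁻¹ * P) * X) - L * (T⁻¹ * P * J₁) * X := by rw [hA', hB']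
    _ = L * (T⁻¹ * P) * (z • 1 - J₁) * X := by
      simp only [Matrix.mul_sub, Matrix.sub_mul, Matrix.mul_smul, Matrix.smul_mul,
        Matrix.mul_one, Matrix.mul_assoc]

theorem pencil_factorization_general
    (n d s t : ℕ) (hsd : s ≤ d) (hdn : d ≤ n)
    (A B S T : Matrix (Fin n) (Fin n) ℂ) (hT : IsUnit T)
    (J : Matrix (Fin d) (Fin d) ℂ)
    (N : Matrix (Fin (n - d)) (Fin (n - d)) ℂ)
    (hA : T * A * S =
      (Matrix.fromBlocks J 0 0 (1 : Matrix (Fin (n - d)) (Fin (n - d)) ℂ)).submatrix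
        (finSumFinEquiv.trans (finCongr (Nat.add_sub_cancel' hdn))).symm
        (finSumFinEquiv.trans (finCongr (Nat.add_sub_cancel' hdn))).symm)
    (hB : T * B * S =
      (Matrix.fromBlocks (1 : Matrix (Fin d) (Fin d) ℂ) 0 0 N).submatrix
        (finSumFinEquiv.trans (finCongr (Nat.add_sub_cancel' hdn))).symm
        (finSumFinEquiv.trans (finCongr (Nat.add_sub_cancel' hdn))).symm)
    (J₁ : Matrix (Fin s) (Fin s) ℂ) (J₂ : Matrix (Fin (d - s)) (Fin (d - s)) ℂ)
    (hJ : J = (Matrix.fromBlocks J₁ 0 0 J₂).submatrix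
        (finSumFinEquiv.trans (finCongr (Nat.add_sub_cancel' hsd))).symm
        (finSumFinEquiv.trans (finCongr (Nat.add_sub_cancel' hsd))).symm)
    (F : ℕ → Matrix (Fin n) (Fin n) ℂ)
    (hF : ∀ k : ℕ, F k =
      S.submatrix id (Fin.castLE (hsd.trans hdn)) * (J₁ ^ k) *
        S⁻¹.submatrix (Fin.castLE (hsd.trans hdn)) id)
    (L D : Matrix (Fin n) (Fin t) ℂ)
    (R : Matrix (Fin n) (Fin t) ℂ) (hR : R = F 0 * D)
    (Ahat Bhat : Matrix (Fin t) (Fin t) ℂ)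
    (hAhat : Ahat = Lᴴ * A * R) (hBhat : Bhat = Lᴴ * B * R) :
    ∀ z : ℂ,
      z • Bhat - Ahat =
        (Lᴴ * T⁻¹.submatrix id (Fin.castLE (hsd.trans hdn))) *
          (z • (1 : Matrix (Fin s) (Fin s) ℂ) - J₁) *
          (S⁻¹.submatrix (Fin.castLE (hsd.trans hdn)) id * D) := by
  intro z
  have hJ₁ : J * castLEIncl ℂ hsd = castLEIncl ℂ hsd * J₁ :=
    hJ ▸ submatrix_fromBlocks_mul_castLEIncl hsd J₁ J₂
  have hTAS : T * A * S * castLEIncl ℂ (hsd.trans hdn) = castLEIncl ℂ (hsd.trans hdn) * J₁ := by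
    rw [hA, ← castLEIncl_mul_castLEIncl hdn hsd, ← Matrix.mul_assoc,
      submatrix_fromBlocks_mul_castLEIncl, Matrix.mul_assoc, hJ₁, Matrix.mul_assoc]
  have hTBS : T * B * S * castLEIncl ℂ (hsd.trans hdn) = castLEIncl ℂ (hsd.trans hdn) := by
    rw [hB, ← castLEIncl_mul_castLEIncl hdn hsd, ← Matrix.mul_assoc,
      submatrix_fromBlocks_mul_castLEIncl, Matrix.mul_one]
  subst hAhat hBhat hR
  rw [hF 0, pow_zero, Matrix.mul_one, submatrix_id_castLE_eq_mul, submatrix_id_castLE_eq_mul,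
    Matrix.mul_assoc (S * _)]
  exact deflating_pencil_factorization ((isUnit_iff_isUnit_det T).mp hT) hTAS hTBS Lᴴ _ z

/-- Factorization `z·B̂ − Â = (L*·(T⁻¹)_{(:,1:s)})·(z·I_s − J₁)·((S⁻¹)_{(1:s,:)}·D)`
where `R = F₀·D`, `Â = L*·A·R`, `B̂ = L*·B·R`. -/
theorem pencil_factorization
    (n d s t : ℕ) (hs : 0 < s) (hsd : s ≤ d) (hdn : d ≤ n) (hts : s ≤ t)
    (A B S T : Matrix (Fin n) (Fin n) ℂ) (hS : IsUnit S) (hT : IsUnit T)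
    (J : Matrix (Fin d) (Fin d) ℂ) (hJtri : J.BlockTriangular (id : Fin d → Fin d))
    (N : Matrix (Fin (n - d)) (Fin (n - d)) ℂ) (hN : IsNilpotent N)
    (hA : T * A * S =
      (Matrix.fromBlocks J 0 0 (1 : Matrix (Fin (n - d)) (Fin (n - d)) ℂ)).submatrix
        (finSumFinEquiv.trans (finCongr (Nat.add_sub_cancel' hdn))).symm
        (finSumFinEquiv.trans (finCongr (Nat.add_sub_cancel' hdn))).symm)
    (hB : T * B * S =
      (Matrix.fromBlocks (1 : Matrix (Fin d) (Fin d) ℂ) 0 0 N).submatrix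
        (finSumFinEquiv.trans (finCongr (Nat.add_sub_cancel' hdn))).symm
        (finSumFinEquiv.trans (finCongr (Nat.add_sub_cancel' hdn))).symm)
    (J₁ : Matrix (Fin s) (Fin s) ℂ) (J₂ : Matrix (Fin (d - s)) (Fin (d - s)) ℂ)
    (hJ : J = (Matrix.fromBlocks J₁ 0 0 J₂).submatrix
        (finSumFinEquiv.trans (finCongr (Nat.add_sub_cancel' hsd))).symm
        (finSumFinEquiv.trans (finCongr (Nat.add_sub_cancel' hsd))).symm)
    (F : ℕ → Matrix (Fin n) (Fin n) ℂ)
    (hF : ∀ k : ℕ, F k =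
      S.submatrix id (Fin.castLE (hsd.trans hdn)) * (J₁ ^ k) *
        S⁻¹.submatrix (Fin.castLE (hsd.trans hdn)) id)
    (L D : Matrix (Fin n) (Fin t) ℂ)
    (R : Matrix (Fin n) (Fin t) ℂ) (hR : R = F 0 * D)
    (Ahat Bhat : Matrix (Fin t) (Fin t) ℂ)
    (hAhat : Ahat = Lᴴ * A * R) (hBhat : Bhat = Lᴴ * B * R) :
    ∀ z : ℂ,
      z • Bhat - Ahat =
        (Lᴴ * T⁻¹.submatrix id (Fin.castLE (hsd.trans hdn))) *
          (z • (1 : Matrix (Fin s) (Fin s) ℂ) - J₁) *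
          (S⁻¹.submatrix (Fin.castLE (hsd.trans hdn)) id * D) :=
  pencil_factorization_general n d s t hsd hdn A B S T hT J N hA hB J₁ J₂ hJ F hF L D R hR Ahat Bhat
    hAhat hBhat
end

section
/- Under the Weierstrass setting, let t ≥ s, let L, D ∈ ℂ^{n×t}, set R := F₀·D, Â := L*·A·R and B̂ := L*·B·R. If rank(L*·(T^{-1})_{(:,1:s)}) = s and rank((S^{-1})_{(1:s,:)}·D) = s, then for every z ∈ ℂ one has rank(z·B̂ − Â) = rank(z·I_s − J₁); in particular, rank(z·B̂ − Â) < s if and only if z is a diagonal entry of J₁ (i.e., an eigenvalue of the pencil zB − A inside Γ), and rank(z·B̂ − Â) = s otherwise. -/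
/-!
Let `E` be the matrix of the inclusion of the first `s` coordinates. The Weierstrass form gives
`(z·TBS − TAS)·E = E·(z·I − J₁)`, and `F₀ = S E (S⁻¹)_{(1:s,:)}`, so
`z·B̂ − Â = (L*·T⁻¹·E) (z·I − J₁) ((S⁻¹)_{(1:s,:)}·D)`.
The outer factors have full column, resp. row, rank `s`, so they do not change the rank, and the
triangular matrix `z·I − J₁` is singular exactly when `z` is one of its diagonal entries.
-/

open Matrix

def finSplit {a b : ℕ} (h : a ≤ b) : Fin b ≃ Fin a ⊕ Fin (b - a) :=
  (finSumFinEquiv.trans (finCongr (Nat.add_sub_cancel' h))).symm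

@[simp]
theorem finSplit_symm_inl {a b : ℕ} (h : a ≤ b) (i : Fin a) :
    (finSplit h).symm (Sum.inl i) = Fin.castLE h i := by
  ext; simp [finSplit]

@[simp]
theorem finSplit_symm_inr {a b : ℕ} (h : a ≤ b) (i : Fin (b - a)) :
    ((finSplit h).symm (Sum.inr i) : ℕ) = a + i := by
  simp [finSplit]

@[simp]
theorem finSplit_castLE {a b : ℕ} (h : a ≤ b) (i : Fin a) :
    finSplit h (Fin.castLE h i) = Sum.inl i := by
  rw [← Equiv.eq_symm_apply, finSplit_symm_inl]

namespace Matrix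

section Rank

variable {K : Type*} [Field K] {l m n : Type*} [Fintype m] [Fintype n]

theorem range_mulVecLin_eq_top_of_rank_eq (Y : Matrix m n K) (hY : Y.rank = Fintype.card m) :
    LinearMap.range Y.mulVecLin = ⊤ :=
  Submodule.eq_top_of_finrank_eq (by rw [← rank, hY, Module.finrank_fintype_fun_eq_card])

theorem rank_mul_of_rank_eq_card_height (M : Matrix l m K) {Y : Matrix m n K}
    (hY : Y.rank = Fintype.card m) : (M * Y).rank = M.rank := by
  rw [rank, rank, mulVecLin_mul,
    LinearMap.range_comp_of_range_eq_top _ (range_mulVecLin_eq_top_of_rank_eq Y hY)]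

theorem rank_mul_of_rank_eq_card_width [Fintype l] {X : Matrix l m K}
    (hX : X.rank = Fintype.card m) (M : Matrix m n K) : (X * M).rank = M.rank := by
  rw [← rank_transpose, transpose_mul,
    rank_mul_of_rank_eq_card_height _ (by rwa [rank_transpose]), rank_transpose]

theorem rank_lt_card_iff_det_eq_zero [DecidableEq n] (M : Matrix n n K) :
    M.rank < Fintype.card n ↔ M.det = 0 := by
  refine ⟨fun h => by_contra fun hdet => h.ne (rank_of_det_ne_zero hdet), fun hdet => ?_⟩
  refine (rank_le_card_width M).lt_of_ne fun h => ?_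
  have hsurj : Function.Surjective M.mulVec :=
    LinearMap.range_eq_top.mp (range_mulVecLin_eq_top_of_rank_eq M h)
  exact (isUnit_iff_isUnit_det M).mp (mulVec_surjective_iff_isUnit.mp hsurj) |>.ne_zero hdet

theorem IsUpperTriangular.rank_smul_one_sub_lt_card_iff [DecidableEq n] [LinearOrder n]
    {M : Matrix n n K} (hM : M.IsUpperTriangular) (z : K) :
    (z • (1 : Matrix n n K) - M).rank < Fintype.card n ↔ ∃ i, z = M i i := by
  have hzM : (z • (1 : Matrix n n K) - M).IsUpperTriangular := by
    rw [smul_one_eq_diagonal]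
    exact BlockTriangular.sub (blockTriangular_diagonal _) hM
  rw [rank_lt_card_iff_det_eq_zero, det_of_isUpperTriangular hzM, Finset.prod_eq_zero_iff]
  simp [sub_eq_zero]

end Rank

theorem IsUpperTriangular.submatrix_of_strictMono {R m n : Type*} [Zero R] [Preorder m]
    [Preorder n] {M : Matrix n n R} (hM : M.IsUpperTriangular) {f : m → n} (hf : StrictMono f) :
    (M.submatrix f f).IsUpperTriangular :=
  fun _ _ hij => hM (hf hij)

section Pencil

variable {R : Type*} [CommRing R] {n m : Type*} [Fintype n] [DecidableEq n] [Fintype m]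

theorem pencil_mul_eq_of_mul_eq {A B S T : Matrix n n R} (hT : IsUnit T) {E : Matrix n m R}
    {K : Matrix m m R} (z : R) (h : (z • (T * B * S) - T * A * S) * E = E * K) :
    (z • B - A) * (S * E) = T⁻¹ * E * K := by
  have hTT : T⁻¹ * T = 1 := nonsing_inv_mul T ((isUnit_iff_isUnit_det T).mp hT)
  calc (z • B - A) * (S * E)
      = T⁻¹ * T * ((z • B - A) * (S * E)) := by rw [hTT, Matrix.one_mul]
    _ = T⁻¹ * ((z • (T * B * S) - T * A * S) * E) := by
      simp only [Matrix.mul_sub, Matrix.sub_mul, Matrix.mul_smul, Matrix.smul_mul,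
        Matrix.mul_assoc]
    _ = T⁻¹ * E * K := by rw [h, Matrix.mul_assoc]

theorem smul_mul_sub_mul_eq_of_mul_eq {p q : Type*} {A B S T : Matrix n n R} (hT : IsUnit T)
    {E : Matrix n m R} {K : Matrix m m R} (z : R)
    (h : (z • (T * B * S) - T * A * S) * E = E * K) (X : Matrix p n R) (Y : Matrix m q R) :
    z • (X * B * (S * E * Y)) - X * A * (S * E * Y) = X * (T⁻¹ * E) * K * Y := by
  calc z • (X * B * (S * E * Y)) - X * A * (S * E * Y) = X * ((z • B - A) * (S * E)) * Y := by
        simp only [Matrix.mul_sub, Matrix.sub_mul, Matrix.mul_smul, Matrix.smul_mul,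
          Matrix.mul_assoc]
    _ = X * (T⁻¹ * E) * K * Y := by
        rw [pencil_mul_eq_of_mul_eq hT z h]
        simp only [Matrix.mul_assoc]

end Pencil

section Inclusion

variable {R : Type*} [Ring R]

def castLEInclusion (R : Type*) [Zero R] [One R] {a b : ℕ} (h : a ≤ b) :
    Matrix (Fin b) (Fin a) R :=
  (1 : Matrix (Fin b) (Fin b) R).submatrix id (Fin.castLE h)

theorem mul_castLEInclusion {m : Type*} {a b : ℕ} (h : a ≤ b) (M : Matrix m (Fin b) R) :
    M * castLEInclusion R h = M.submatrix id (Fin.castLE h) :=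
  mul_submatrix_one (Equiv.refl _) _ M

theorem castLEInclusion_mul_castLEInclusion {a b c : ℕ} (hab : a ≤ b) (hbc : b ≤ c) :
    castLEInclusion R hbc * castLEInclusion R hab = castLEInclusion R (hab.trans hbc) := by
  rw [mul_castLEInclusion, castLEInclusion, submatrix_submatrix, Function.id_comp,
    Fin.castLE_comp_castLE]
  rfl

theorem castLEInclusion_eq_submatrix_fromRows {a b : ℕ} (h : a ≤ b) :
    castLEInclusion R h =
      (fromRows (1 : Matrix (Fin a) (Fin a) R) 0).submatrix (finSplit h) id := by
  ext i j
  obtain ⟨x | x, rfl⟩ := (finSplit h).symm.surjective i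
  · simp [castLEInclusion, one_apply]
  · simp [castLEInclusion, one_apply, Fin.ext_iff]
    omega

theorem submatrix_fromBlocks_mul_castLEInclusion {a b : ℕ} (h : a ≤ b)
    (P : Matrix (Fin a) (Fin a) R) (Q : Matrix (Fin (b - a)) (Fin (b - a)) R) :
    (fromBlocks P 0 0 Q).submatrix (finSplit h) (finSplit h) * castLEInclusion R h =
      castLEInclusion R h * P := by
  rw [castLEInclusion_eq_submatrix_fromRows, submatrix_mul_equiv, fromBlocks_mul_fromRows]
  simpa using submatrix_mul (fromRows 1 0) P (finSplit h) id id Function.bijective_id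

theorem submatrix_castLE_submatrix_fromBlocks {a b : ℕ} (h : a ≤ b)
    (P : Matrix (Fin a) (Fin a) R) (Q : Matrix (Fin (b - a)) (Fin (b - a)) R) :
    ((fromBlocks P 0 0 Q).submatrix (finSplit h) (finSplit h)).submatrix
      (Fin.castLE h) (Fin.castLE h) = P := by
  ext i j
  simp

theorem smul_submatrix_fromBlocks_sub {l m n : Type*} (e : n → l ⊕ m) (z : R)
    (P P' : Matrix l l R) (Q Q' : Matrix m m R) :
    z • (fromBlocks P 0 0 Q).submatrix e e - (fromBlocks P' 0 0 Q').submatrix e e =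
      (fromBlocks (z • P - P') 0 0 (z • Q - Q')).submatrix e e := by
  change (z • fromBlocks P 0 0 Q - fromBlocks P' 0 0 Q').submatrix e e = _
  congr 1
  ext (i | i) (j | j) <;> simp

theorem weierstrass_pencil_mul_castLEInclusion {n d s : ℕ} (hsd : s ≤ d) (hdn : d ≤ n)
    {J : Matrix (Fin d) (Fin d) R} {N : Matrix (Fin (n - d)) (Fin (n - d)) R}
    {J₁ : Matrix (Fin s) (Fin s) R} {J₂ : Matrix (Fin (d - s)) (Fin (d - s)) R}
    (hJ : J = (fromBlocks J₁ 0 0 J₂).submatrix (finSplit hsd) (finSplit hsd)) (z : R) :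
    (z • (fromBlocks 1 0 0 N).submatrix (finSplit hdn) (finSplit hdn) -
        (fromBlocks J 0 0 1).submatrix (finSplit hdn) (finSplit hdn)) *
        castLEInclusion R (hsd.trans hdn) =
      castLEInclusion R (hsd.trans hdn) * (z • 1 - J₁) := by
  have hone : (1 : Matrix (Fin d) (Fin d) R) =
      (fromBlocks 1 0 0 1).submatrix (finSplit hsd) (finSplit hsd) := by
    rw [fromBlocks_one, submatrix_one_equiv]
  rw [smul_submatrix_fromBlocks_sub, ← castLEInclusion_mul_castLEInclusion hsd hdn,
    ← Matrix.mul_assoc, submatrix_fromBlocks_mul_castLEInclusion, Matrix.mul_assoc, hJ, hone,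
    smul_submatrix_fromBlocks_sub, submatrix_fromBlocks_mul_castLEInclusion, Matrix.mul_assoc]

end Inclusion

end Matrix

theorem rank_projected_pencil_general
    (n d s t : ℕ) (hsd : s ≤ d) (hdn : d ≤ n)
    (A B S T : Matrix (Fin n) (Fin n) ℂ) (hT : IsUnit T)
    (J : Matrix (Fin d) (Fin d) ℂ) (hJtri : J.BlockTriangular (id : Fin d → Fin d))
    (N : Matrix (Fin (n - d)) (Fin (n - d)) ℂ)
    (hA : T * A * S =
      (Matrix.fromBlocks J 0 0 (1 : Matrix (Fin (n - d)) (Fin (n - d)) ℂ)).submatrix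
        (finSumFinEquiv.trans (finCongr (Nat.add_sub_cancel' hdn))).symm
        (finSumFinEquiv.trans (finCongr (Nat.add_sub_cancel' hdn))).symm)
    (hB : T * B * S =
      (Matrix.fromBlocks (1 : Matrix (Fin d) (Fin d) ℂ) 0 0 N).submatrix
        (finSumFinEquiv.trans (finCongr (Nat.add_sub_cancel' hdn))).symm
        (finSumFinEquiv.trans (finCongr (Nat.add_sub_cancel' hdn))).symm)
    (J₁ : Matrix (Fin s) (Fin s) ℂ) (J₂ : Matrix (Fin (d - s)) (Fin (d - s)) ℂ)
    (hJ : J = (Matrix.fromBlocks J₁ 0 0 J₂).submatrix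
        (finSumFinEquiv.trans (finCongr (Nat.add_sub_cancel' hsd))).symm
        (finSumFinEquiv.trans (finCongr (Nat.add_sub_cancel' hsd))).symm)
    (F : ℕ → Matrix (Fin n) (Fin n) ℂ)
    (hF : ∀ k : ℕ, F k =
      S.submatrix id (Fin.castLE (hsd.trans hdn)) * (J₁ ^ k) *
        S⁻¹.submatrix (Fin.castLE (hsd.trans hdn)) id)
    (L D : Matrix (Fin n) (Fin t) ℂ)
    (R : Matrix (Fin n) (Fin t) ℂ) (hR : R = F 0 * D)
    (Ahat Bhat : Matrix (Fin t) (Fin t) ℂ)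
    (hAhat : Ahat = Lᴴ * A * R) (hBhat : Bhat = Lᴴ * B * R)
    (hrankL : (Lᴴ * T⁻¹.submatrix id (Fin.castLE (hsd.trans hdn))).rank = s)
    (hrankD : (S⁻¹.submatrix (Fin.castLE (hsd.trans hdn)) id * D).rank = s) :
    ∀ z : ℂ,
      (z • Bhat - Ahat).rank = (z • (1 : Matrix (Fin s) (Fin s) ℂ) - J₁).rank ∧
      ((z • Bhat - Ahat).rank < s ↔ ∃ i : Fin s, z = J₁ i i) ∧
      ((¬ ∃ i : Fin s, z = J₁ i i) → (z • Bhat - Ahat).rank = s) := by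
  intro z
  set E := castLEInclusion ℂ (hsd.trans hdn)
  set Y := S⁻¹.submatrix (Fin.castLE (hsd.trans hdn)) id * D
  have hcol : (z • (T * B * S) - T * A * S) * E = E * (z • 1 - J₁) := by
    rw [hA, hB]
    exact weierstrass_pencil_mul_castLEInclusion hsd hdn hJ z
  have hR' : R = S * E * Y := by
    rw [hR, hF, pow_zero, Matrix.mul_one, mul_castLEInclusion, Matrix.mul_assoc]
  have hrank : (z • Bhat - Ahat).rank = (z • (1 : Matrix (Fin s) (Fin s) ℂ) - J₁).rank := by
    rw [hAhat, hBhat, hR', smul_mul_sub_mul_eq_of_mul_eq hT z hcol, mul_castLEInclusion,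
      rank_mul_of_rank_eq_card_height _ (by rwa [Fintype.card_fin]),
      rank_mul_of_rank_eq_card_width (by rwa [Fintype.card_fin])]
  have hJ₁ : J₁.IsUpperTriangular := by
    have := IsUpperTriangular.submatrix_of_strictMono hJtri (Fin.strictMono_castLE hsd)
    rwa [show J = (fromBlocks J₁ 0 0 J₂).submatrix (finSplit hsd) (finSplit hsd) from hJ,
      submatrix_castLE_submatrix_fromBlocks] at this
  have hdrop :
      (z • (1 : Matrix (Fin s) (Fin s) ℂ) - J₁).rank < s ↔ ∃ i, z = J₁ i i := by
    simpa using hJ₁.rank_smul_one_sub_lt_card_iff z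
  refine ⟨hrank, hrank ▸ hdrop, fun hz => ?_⟩
  rw [hrank]
  exact (rank_le_width _).antisymm (not_lt.mp (hz ∘ hdrop.mp))

/-- If `rank(L*·(T⁻¹)_{(:,1:s)}) = s` and `rank((S⁻¹)_{(1:s,:)}·D) = s`, then
for every `z`, `rank(z·B̂ − Â) = rank(z·I_s − J₁)`; in particular the rank drops below `s`
exactly at the diagonal entries of `J₁` and equals `s` otherwise. -/
theorem rank_projected_pencil
    (n d s t : ℕ) (hs : 0 < s) (hsd : s ≤ d) (hdn : d ≤ n) (hts : s ≤ t)
    (A B S T : Matrix (Fin n) (Fin n) ℂ) (hS : IsUnit S) (hT : IsUnit T)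
    (J : Matrix (Fin d) (Fin d) ℂ) (hJtri : J.BlockTriangular (id : Fin d → Fin d))
    (N : Matrix (Fin (n - d)) (Fin (n - d)) ℂ) (hN : IsNilpotent N)
    (hA : T * A * S =
      (Matrix.fromBlocks J 0 0 (1 : Matrix (Fin (n - d)) (Fin (n - d)) ℂ)).submatrix
        (finSumFinEquiv.trans (finCongr (Nat.add_sub_cancel' hdn))).symm
        (finSumFinEquiv.trans (finCongr (Nat.add_sub_cancel' hdn))).symm)
    (hB : T * B * S =
      (Matrix.fromBlocks (1 : Matrix (Fin d) (Fin d) ℂ) 0 0 N).submatrix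
        (finSumFinEquiv.trans (finCongr (Nat.add_sub_cancel' hdn))).symm
        (finSumFinEquiv.trans (finCongr (Nat.add_sub_cancel' hdn))).symm)
    (J₁ : Matrix (Fin s) (Fin s) ℂ) (J₂ : Matrix (Fin (d - s)) (Fin (d - s)) ℂ)
    (hJ : J = (Matrix.fromBlocks J₁ 0 0 J₂).submatrix
        (finSumFinEquiv.trans (finCongr (Nat.add_sub_cancel' hsd))).symm
        (finSumFinEquiv.trans (finCongr (Nat.add_sub_cancel' hsd))).symm)
    (F : ℕ → Matrix (Fin n) (Fin n) ℂ)
    (hF : ∀ k : ℕ, F k =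
      S.submatrix id (Fin.castLE (hsd.trans hdn)) * (J₁ ^ k) *
        S⁻¹.submatrix (Fin.castLE (hsd.trans hdn)) id)
    (L D : Matrix (Fin n) (Fin t) ℂ)
    (R : Matrix (Fin n) (Fin t) ℂ) (hR : R = F 0 * D)
    (Ahat Bhat : Matrix (Fin t) (Fin t) ℂ)
    (hAhat : Ahat = Lᴴ * A * R) (hBhat : Bhat = Lᴴ * B * R)
    (hrankL : (Lᴴ * T⁻¹.submatrix id (Fin.castLE (hsd.trans hdn))).rank = s)
    (hrankD : (S⁻¹.submatrix (Fin.castLE (hsd.trans hdn)) id * D).rank = s) :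
    ∀ z : ℂ,
      (z • Bhat - Ahat).rank = (z • (1 : Matrix (Fin s) (Fin s) ℂ) - J₁).rank ∧
      ((z • Bhat - Ahat).rank < s ↔ ∃ i : Fin s, z = J₁ i i) ∧
      ((¬ ∃ i : Fin s, z = J₁ i i) → (z • Bhat - Ahat).rank = s) :=
  rank_projected_pencil_general n d s t hsd hdn A B S T hT J hJtri N hA hB J₁ J₂ hJ F hF L D R hR
    Ahat Bhat hAhat hBhat hrankL hrankD
end

section
/- Let A, B be n×n complex matrices such that the pencil z·B − A is regular, i.e., there exists z₀ ∈ ℂ with det(z₀·B − A) ≠ 0. Then there exist an integer d with 0 ≤ d ≤ n, invertible n×n complex matrices T and S, a d×d complex matrix J, and an (n−d)×(n−d) nilpotent complex matrix N, such that T·A·S = [[J, 0],[0, I_{n−d}]] and T·B·S = [[I_d, 0],[0, N]] in 2×2 block form. -/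
/-!
With `M = z₀ • B - A` invertible, `M⁻¹ * A = z₀ • C - 1` for `C = M⁻¹ * B`, so the pencil is
governed by the single matrix `C`. The Fitting decomposition of `C` splits the space into
complementary `C`-invariant subspaces on which `C` acts invertibly (`G`) and nilpotently (`N`).
In an adapted basis `M⁻¹ * B` and `M⁻¹ * A` become `diag(G, N)` and `diag(z₀ • G - 1, z₀ • N - 1)`,
and `z₀ • N - 1` is invertible because `N` is nilpotent. Multiplying on the left by
`diag(G⁻¹, (z₀ • N - 1)⁻¹)` gives `diag(G⁻¹ * (z₀ • G - 1), 1)` and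
`diag(1, (z₀ • N - 1)⁻¹ * N)`, and the last block is nilpotent since its two factors commute.
-/

open Matrix

namespace Module.End

section Semiring

variable {R M : Type*} [Semiring R] [AddCommMonoid M] [Module R M]

theorem apply_mem_ker_of_commute {f g : End R M} (h : Commute f g) :
    ∀ x ∈ LinearMap.ker g, f x ∈ LinearMap.ker g := fun x (hx : g x = 0) => by
  change g (f x) = 0
  rw [← mul_apply, ← h.eq, mul_apply, hx, map_zero]

theorem apply_mem_range_of_commute {f g : End R M} (h : Commute f g) :
    ∀ x ∈ LinearMap.range g, f x ∈ LinearMap.range g := by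
  rintro _ ⟨y, rfl⟩
  exact ⟨f y, by rw [← mul_apply, ← mul_apply, h.eq]⟩

end Semiring

variable {R M : Type*} [Ring R] [AddCommGroup M] [Module R M]

theorem exists_isCompl_isUnit_restrict_isNilpotent_restrict
    [IsNoetherian R M] [IsArtinian R M] (f : End R M) :
    ∃ (p q : Submodule R M) (_ : IsCompl p q) (hp : ∀ x ∈ p, f x ∈ p) (hq : ∀ x ∈ q, f x ∈ q),
      IsUnit (f.restrict hp) ∧ IsNilpotent (f.restrict hq) := by
  obtain ⟨k, hk⟩ := Filter.eventually_atTop.mp f.eventually_isCompl_ker_pow_range_pow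
  -- a positive exponent, so that `ker f ≤ ker (f ^ (k + 1))`
  have hcompl := (hk (k + 1) k.le_succ).symm
  have hcomm := Commute.self_pow f (k + 1)
  refine ⟨_, _, hcompl, apply_mem_range_of_commute hcomm, apply_mem_ker_of_commute hcomm, ?_, ?_⟩
  · refine (isUnit_iff _).mpr (IsArtinian.bijective_of_injective_endomorphism _ ?_)
    rw [← LinearMap.ker_eq_bot, eq_bot_iff]
    rintro ⟨x, hx⟩ hfx
    have hfx : f x = 0 := congrArg Subtype.val hfx
    have hxk : x ∈ LinearMap.ker (f ^ (k + 1)) := by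
      rw [LinearMap.mem_ker, pow_succ, mul_apply, hfx, map_zero]
    exact (Submodule.mem_bot R).mpr (Subtype.ext (hcompl.disjoint.le_bot ⟨hx, hxk⟩))
  · refine ⟨k + 1, ?_⟩
    ext ⟨x, hx⟩
    rw [pow_restrict]
    exact hx

end Module.End

theorem LinearMap.toMatrix_basis_reindex {R M N ι κ ι' κ' : Type*} [CommSemiring R]
    [AddCommMonoid M] [AddCommMonoid N] [Module R M] [Module R N] [Fintype ι] [Fintype ι']
    [Finite κ] [Finite κ'] [DecidableEq ι] [DecidableEq ι']
    (b : Module.Basis ι R M) (c : Module.Basis κ R N) (e : ι ≃ ι') (e' : κ ≃ κ') (f : M →ₗ[R] N) :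
    toMatrix (b.reindex e) (c.reindex e') f = reindex e' e (toMatrix b c f) := by
  ext i j
  simp [LinearMap.toMatrix_apply]

theorem LinearMap.toMatrix_map_prodEquivOfIsCompl {R M ι κ : Type*} [CommRing R]
    [AddCommGroup M] [Module R M] [Fintype ι] [Fintype κ] [DecidableEq ι] [DecidableEq κ]
    {p q : Submodule R M} (hpq : IsCompl p q) (f : Module.End R M)
    (hp : ∀ x ∈ p, f x ∈ p) (hq : ∀ x ∈ q, f x ∈ q) (b₁ : Module.Basis ι R p)
    (b₂ : Module.Basis κ R q) :
    toMatrix ((b₁.prod b₂).map (p.prodEquivOfIsCompl q hpq))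
        ((b₁.prod b₂).map (p.prodEquivOfIsCompl q hpq)) f =
      fromBlocks (toMatrix b₁ b₁ (f.restrict hp)) 0 0 (toMatrix b₂ b₂ (f.restrict hq)) := by
  rw [toMatrix_map_left, toMatrix_map_right, ← toMatrix_prodMap]
  congr 1
  ext x <;> simp [hp, hq]

namespace Matrix

variable {R : Type*} {d n : ℕ}

def finSumFinSubEquiv (hdn : d ≤ n) : Fin d ⊕ Fin (n - d) ≃ Fin n :=
  finSumFinEquiv.trans (finCongr (Nat.add_sub_cancel' hdn))

def blockDiagFin [Zero R] (hdn : d ≤ n) (X : Matrix (Fin d) (Fin d) R)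
    (Y : Matrix (Fin (n - d)) (Fin (n - d)) R) : Matrix (Fin n) (Fin n) R :=
  reindex (finSumFinSubEquiv hdn) (finSumFinSubEquiv hdn) (fromBlocks X 0 0 Y)

variable (hdn : d ≤ n)

theorem blockDiagFin_mul [NonUnitalNonAssocSemiring R] (X X' : Matrix (Fin d) (Fin d) R)
    (Y Y' : Matrix (Fin (n - d)) (Fin (n - d)) R) :
    blockDiagFin hdn X Y * blockDiagFin hdn X' Y' = blockDiagFin hdn (X * X') (Y * Y') := by
  simp [blockDiagFin, submatrix_mul_equiv, fromBlocks_multiply]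

theorem blockDiagFin_one [Zero R] [One R] :
    blockDiagFin hdn (1 : Matrix (Fin d) (Fin d) R) 1 = 1 := by
  simp [blockDiagFin]

theorem blockDiagFin_sub [AddGroup R] (X X' : Matrix (Fin d) (Fin d) R)
    (Y Y' : Matrix (Fin (n - d)) (Fin (n - d)) R) :
    blockDiagFin hdn X Y - blockDiagFin hdn X' Y' = blockDiagFin hdn (X - X') (Y - Y') := by
  ext i j
  obtain ⟨a, rfl⟩ := (finSumFinSubEquiv hdn).surjective i
  obtain ⟨b, rfl⟩ := (finSumFinSubEquiv hdn).surjective j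
  rcases a with a | a <;> rcases b with b | b <;> simp [blockDiagFin]

theorem smul_blockDiagFin {S : Type*} [AddMonoid R] [DistribSMul S R] (c : S)
    (X : Matrix (Fin d) (Fin d) R) (Y : Matrix (Fin (n - d)) (Fin (n - d)) R) :
    c • blockDiagFin hdn X Y = blockDiagFin hdn (c • X) (c • Y) := by
  ext i j
  obtain ⟨a, rfl⟩ := (finSumFinSubEquiv hdn).surjective i
  obtain ⟨b, rfl⟩ := (finSumFinSubEquiv hdn).surjective j
  rcases a with a | a <;> rcases b with b | b <;> simp [blockDiagFin]

theorem det_blockDiagFin [CommRing R] (X : Matrix (Fin d) (Fin d) R)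
    (Y : Matrix (Fin (n - d)) (Fin (n - d)) R) :
    (blockDiagFin hdn X Y).det = X.det * Y.det := by
  simp [blockDiagFin, det_fromBlocks_zero₂₁]

theorem isUnit_blockDiagFin [CommRing R] {X : Matrix (Fin d) (Fin d) R}
    {Y : Matrix (Fin (n - d)) (Fin (n - d)) R} (hX : IsUnit X) (hY : IsUnit Y) :
    IsUnit (blockDiagFin hdn X Y) := by
  rw [isUnit_iff_isUnit_det, det_blockDiagFin]
  exact ((isUnit_iff_isUnit_det X).mp hX).mul ((isUnit_iff_isUnit_det Y).mp hY)

end Matrix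

theorem Matrix.exists_conj_eq_blockDiagFin_isUnit_isNilpotent {K : Type*} [Field K] {n : ℕ}
    (C : Matrix (Fin n) (Fin n) K) :
    ∃ (d : ℕ) (hdn : d ≤ n) (P : Matrix (Fin n) (Fin n) K) (G : Matrix (Fin d) (Fin d) K)
      (N : Matrix (Fin (n - d)) (Fin (n - d)) K),
      IsUnit P ∧ IsUnit G ∧ IsNilpotent N ∧ P⁻¹ * C * P = blockDiagFin hdn G N := by
  obtain ⟨p, q, hpq, hp, hq, hunit, hnil⟩ :=
    Module.End.exists_isCompl_isUnit_restrict_isNilpotent_restrict (toLin' C)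
  have hrank := Submodule.finrank_add_eq_of_isCompl hpq
  rw [Module.finrank_fin_fun] at hrank
  have hdn : Module.finrank K p ≤ n := by omega
  let b₁ := Module.finBasisOfFinrankEq K p rfl
  let b₂ := Module.finBasisOfFinrankEq K q (n := n - Module.finrank K p) (by omega)
  let b := ((b₁.prod b₂).map (p.prodEquivOfIsCompl q hpq)).reindex (finSumFinSubEquiv hdn)
  let std := Pi.basisFun K (Fin n)
  refine ⟨_, hdn, std.toMatrix b, LinearMap.toMatrix b₁ b₁ ((toLin' C).restrict hp),
    LinearMap.toMatrix b₂ b₂ ((toLin' C).restrict hq),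
    IsUnit.of_mul_eq_one _ (std.toMatrix_mul_toMatrix_flip b),
    hunit.map (LinearMap.toMatrixAlgEquiv b₁), (LinearMap.isNilpotent_toMatrix_iff b₂ _).mpr hnil, ?_⟩
  have hC : LinearMap.toMatrix std std (toLin' C) = C := by
    rw [LinearMap.toMatrix_eq_toMatrix', LinearMap.toMatrix'_toLin']
  calc (std.toMatrix b)⁻¹ * C * std.toMatrix b
      = b.toMatrix std * LinearMap.toMatrix std std (toLin' C) * std.toMatrix b := by
        rw [inv_eq_left_inv (b.toMatrix_mul_toMatrix_flip std), hC]
    _ = LinearMap.toMatrix b b (toLin' C) :=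
        basis_toMatrix_mul_linearMap_toMatrix_mul_basis_toMatrix _ _ _ _ _
    _ = blockDiagFin hdn _ _ := by
        rw [LinearMap.toMatrix_basis_reindex, LinearMap.toMatrix_map_prodEquivOfIsCompl]
        rfl

theorem Matrix.commute_nonsing_inv_left {ι R : Type*} [Fintype ι] [DecidableEq ι] [CommRing R]
    {A B : Matrix ι ι R} (h : Commute A B) : Commute A⁻¹ B := by
  by_cases hA : IsUnit A.det
  · obtain ⟨u, rfl⟩ := (isUnit_iff_isUnit_det A).mpr hA
    rw [← coe_units_inv]
    exact h.units_inv_left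
  · rw [nonsing_inv_apply_not_isUnit A hA]
    exact Commute.zero_left B

/-- Every regular pencil `z·B − A` admits a Weierstrass canonical form:
there are invertible `T`, `S` with `T·A·S = diag(J, I_{n−d})` and `T·B·S = diag(I_d, N)`
with `N` nilpotent. -/
theorem weierstrass_canonical_form
    (n : ℕ) (A B : Matrix (Fin n) (Fin n) ℂ)
    (hreg : ∃ z₀ : ℂ, (z₀ • B - A).det ≠ 0) :
    ∃ (d : ℕ) (hdn : d ≤ n) (T S : Matrix (Fin n) (Fin n) ℂ),
      IsUnit T ∧ IsUnit S ∧
      ∃ (J : Matrix (Fin d) (Fin d) ℂ) (N : Matrix (Fin (n - d)) (Fin (n - d)) ℂ),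
        IsNilpotent N ∧
        T * A * S =
          (Matrix.fromBlocks J 0 0 (1 : Matrix (Fin (n - d)) (Fin (n - d)) ℂ)).submatrix
            (finSumFinEquiv.trans (finCongr (Nat.add_sub_cancel' hdn))).symm
            (finSumFinEquiv.trans (finCongr (Nat.add_sub_cancel' hdn))).symm ∧
        T * B * S =
          (Matrix.fromBlocks (1 : Matrix (Fin d) (Fin d) ℂ) 0 0 N).submatrix
            (finSumFinEquiv.trans (finCongr (Nat.add_sub_cancel' hdn))).symm
            (finSumFinEquiv.trans (finCongr (Nat.add_sub_cancel' hdn))).symm := by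
  obtain ⟨z₀, hz₀⟩ := hreg
  set M := z₀ • B - A
  have hM : IsUnit M := (isUnit_iff_isUnit_det M).mpr (isUnit_iff_ne_zero.mpr hz₀)
  have hMA : M⁻¹ * A = z₀ • (M⁻¹ * B) - 1 := by
    rw [← nonsing_inv_mul M ((isUnit_iff_isUnit_det M).mp hM), mul_sub, Matrix.mul_smul]
    abel
  obtain ⟨d, hdn, P, G, N, hP, hG, hN, hPC⟩ :=
    exists_conj_eq_blockDiagFin_isUnit_isNilpotent (M⁻¹ * B)
  set Z := z₀ • N - 1
  have hZ : IsUnit Z := (hN.smul z₀).isUnit_sub_one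
  have hZN : Commute Z N := ((Commute.refl N).smul_left z₀).sub_left (Commute.one_left N)
  have hPAP : P⁻¹ * (M⁻¹ * A) * P = blockDiagFin hdn (z₀ • G - 1) Z := by
    rw [hMA, mul_sub, sub_mul, mul_one, nonsing_inv_mul P ((isUnit_iff_isUnit_det P).mp hP),
      Matrix.mul_smul, Matrix.smul_mul, hPC, ← blockDiagFin_one hdn, smul_blockDiagFin,
      blockDiagFin_sub]
  refine ⟨d, hdn, blockDiagFin hdn G⁻¹ Z⁻¹ * P⁻¹ * M⁻¹, P,
    ((isUnit_blockDiagFin hdn (isUnit_nonsing_inv_iff.mpr hG) (isUnit_nonsing_inv_iff.mpr hZ)).mul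
      (isUnit_nonsing_inv_iff.mpr hP)).mul (isUnit_nonsing_inv_iff.mpr hM), hP,
    G⁻¹ * (z₀ • G - 1), Z⁻¹ * N, (commute_nonsing_inv_left hZN).isNilpotent_mul_left hN, ?_, ?_⟩
  · calc _ = blockDiagFin hdn G⁻¹ Z⁻¹ * (P⁻¹ * (M⁻¹ * A) * P) := by simp only [mul_assoc]
      _ = _ := by
        rw [hPAP, blockDiagFin_mul, nonsing_inv_mul Z ((isUnit_iff_isUnit_det Z).mp hZ)]
        rfl
  · calc _ = blockDiagFin hdn G⁻¹ Z⁻¹ * (P⁻¹ * (M⁻¹ * B) * P) := by simp only [mul_assoc]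
      _ = _ := by
        rw [hPC, blockDiagFin_mul, nonsing_inv_mul G ((isUnit_iff_isUnit_det G).mp hG)]
        rfl
end
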